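/- arXiv:2307.07774 — 3 statements merged into one kernel-verified Lean document; each statement's English description precedes it below -/
import Mathlib

section
/- Let F be a field and ν, η, ω three 3-cocycles on the 4-simplex with vertex set {0,1,2,3,4}, with ω(ijkl) ≠ 0 for every 4-element subset. Then for all a, b ∈ F, Q(ν + a·ω, η + b·ω) = Q(ν, η). In other words, Q(ν,η) depends only on the classes of ν and η modulo scalar multiples of ω. -/
/-- A 3-cochain on the 4-simplex `{0,1,2,3,4}` is encoded by its five values
`c k` on the increasing 4-tuple `t_k` omitting vertex `k`.  Given such
cochains `ν`, `η` and a nowhere-vanishing `ω`, define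
`Q(ν,η) = ∑ k, (−1)^k ν(t_k)·η(t_k)/ω(t_k)`. -/
def heptagonQ (F : Type*) [Field F] (ω ν η : Fin 5 → F) : F :=
  ∑ k : Fin 5, (-1 : F) ^ (k : ℕ) * (ν k * η k / ω k)

/-- for 3-cocycles `ν`, `η`, `ω` on the 4-simplex with `ω`
nowhere vanishing, `Q(ν + a·ω, η + b·ω) = Q(ν, η)`; i.e. `Q` depends only on
the classes of `ν` and `η` modulo multiples of `ω`. -/
theorem heptagonQ_mod_omega
    (F : Type*) [Field F] (ν η ω : Fin 5 → F)
    (hν : ∑ k : Fin 5, (-1 : F) ^ (k : ℕ) * ν k = 0)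
    (hη : ∑ k : Fin 5, (-1 : F) ^ (k : ℕ) * η k = 0)
    (hω : ∑ k : Fin 5, (-1 : F) ^ (k : ℕ) * ω k = 0)
    (hnz : ∀ k : Fin 5, ω k ≠ 0) (a b : F) :
    heptagonQ F ω (fun k => ν k + a * ω k) (fun k => η k + b * ω k) =
      heptagonQ F ω ν η := by
  simp only [heptagonQ]
  have h : ∀ k : Fin 5, (-1 : F) ^ (k : ℕ) * ((ν k + a * ω k) * (η k + b * ω k) / ω k) =
      (-1 : F) ^ (k : ℕ) * (ν k * η k / ω k) + a * ((-1 : F) ^ (k : ℕ) * η k)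
        + b * ((-1 : F) ^ (k : ℕ) * ν k) + a * b * ((-1 : F) ^ (k : ℕ) * ω k) := by
    intro k
    field_simp [hnz k]
    ring
  simp_rw [h]
  rw [Finset.sum_add_distrib, Finset.sum_add_distrib, Finset.sum_add_distrib,
    ← Finset.mul_sum, ← Finset.mul_sum, ← Finset.mul_sum, hν, hη, hω]
  ring
end

section
/- Let F be a field of characteristic 2 and ν, η, ω three 3-cocycles on the 5-simplex with vertex set {0,1,2,3,4,5}, with ω(ijkl) ≠ 0 for every 4-element subset. For each j, let Q_j denote the value Q(ν,η) computed on the 4-face with vertex set {0,…,5}∖{j}. Then Σ_{j=0}^{5} (Q_j)² = 0. -/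
/-- A 3-cochain on vertex set `Fin 6` assigns a value to each (increasing)
4-tuple of vertices.  For a vertex `j : Fin 6`, the 4-face of the 5-simplex
opposite to `j` has vertices `a_m = j.succAbove m` (`m : Fin 5`), listed
increasingly.  `heptagonQface F ν η ω j` is the value
`Q(ν,η) = ∑ k, (−1)^k ν(t_k)·η(t_k)/ω(t_k)` computed on this 4-face, where
`t_k` is the increasing 4-tuple omitting `a_k`. -/
def heptagonQface (F : Type*) [Field F]
    (ν η ω : Fin 6 → Fin 6 → Fin 6 → Fin 6 → F) (j : Fin 6) : F :=
  ∑ k : Fin 5,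
    (-1 : F) ^ (k : ℕ) *
      (ν (j.succAbove (k.succAbove 0)) (j.succAbove (k.succAbove 1))
          (j.succAbove (k.succAbove 2)) (j.succAbove (k.succAbove 3)) *
        η (j.succAbove (k.succAbove 0)) (j.succAbove (k.succAbove 1))
          (j.succAbove (k.succAbove 2)) (j.succAbove (k.succAbove 3)) /
        ω (j.succAbove (k.succAbove 0)) (j.succAbove (k.succAbove 1))
          (j.succAbove (k.succAbove 2)) (j.succAbove (k.succAbove 3)))


/-- in characteristic 2, for 3-cocycles `ν`, `η`, `ω` on the
5-simplex `{0,…,5}` with `ω` nowhere vanishing, the sum of the squares of the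
values of `Q` over the six 4-faces vanishes. -/
theorem heptagonQ_sum_of_squares_char_two
    (F : Type*) [Field F] [CharP F 2]
    (ν η ω : Fin 6 → Fin 6 → Fin 6 → Fin 6 → F)
    (hν : ∀ i j k l m : Fin 6, i < j → j < k → k < l → l < m →
      ν j k l m - ν i k l m + ν i j l m - ν i j k m + ν i j k l = 0)
    (hη : ∀ i j k l m : Fin 6, i < j → j < k → k < l → l < m →
      η j k l m - η i k l m + η i j l m - η i j k m + η i j k l = 0)
    (hω : ∀ i j k l m : Fin 6, i < j → j < k → k < l → l < m →
      ω j k l m - ω i k l m + ω i j l m - ω i j k m + ω i j k l = 0)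
    (hnz : ∀ i j k l : Fin 6, i < j → j < k → k < l → ω i j k l ≠ 0) :
    ∑ j : Fin 6, (heptagonQface F ν η ω j) ^ 2 = 0 := by
  haveI : Fact (Nat.Prime 2) := ⟨Nat.prime_two⟩
  have h2 : (2 : F) = 0 := CharTwo.two_eq_zero
  have h : ∑ j : Fin 6, heptagonQface F ν η ω j = 0 := by
    simp only [heptagonQface, Fin.sum_univ_six, Fin.sum_univ_five]
    have e5_0_0 : ((0:Fin 5).succAbove 0) = 1 := rfl
    have e5_0_1 : ((0:Fin 5).succAbove 1) = 2 := rfl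
    have e5_0_2 : ((0:Fin 5).succAbove 2) = 3 := rfl
    have e5_0_3 : ((0:Fin 5).succAbove 3) = 4 := rfl
    have e5_1_0 : ((1:Fin 5).succAbove 0) = 0 := rfl
    have e5_1_1 : ((1:Fin 5).succAbove 1) = 2 := rfl
    have e5_1_2 : ((1:Fin 5).succAbove 2) = 3 := rfl
    have e5_1_3 : ((1:Fin 5).succAbove 3) = 4 := rfl
    have e5_2_0 : ((2:Fin 5).succAbove 0) = 0 := rfl
    have e5_2_1 : ((2:Fin 5).succAbove 1) = 1 := rfl
    have e5_2_2 : ((2:Fin 5).succAbove 2) = 3 := rfl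
    have e5_2_3 : ((2:Fin 5).succAbove 3) = 4 := rfl
    have e5_3_0 : ((3:Fin 5).succAbove 0) = 0 := rfl
    have e5_3_1 : ((3:Fin 5).succAbove 1) = 1 := rfl
    have e5_3_2 : ((3:Fin 5).succAbove 2) = 2 := rfl
    have e5_3_3 : ((3:Fin 5).succAbove 3) = 4 := rfl
    have e5_4_0 : ((4:Fin 5).succAbove 0) = 0 := rfl
    have e5_4_1 : ((4:Fin 5).succAbove 1) = 1 := rfl
    have e5_4_2 : ((4:Fin 5).succAbove 2) = 2 := rfl
    have e5_4_3 : ((4:Fin 5).succAbove 3) = 3 := rfl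
    have e6_0_0 : ((0:Fin 6).succAbove 0) = 1 := rfl
    have e6_0_1 : ((0:Fin 6).succAbove 1) = 2 := rfl
    have e6_0_2 : ((0:Fin 6).succAbove 2) = 3 := rfl
    have e6_0_3 : ((0:Fin 6).succAbove 3) = 4 := rfl
    have e6_0_4 : ((0:Fin 6).succAbove 4) = 5 := rfl
    have e6_1_0 : ((1:Fin 6).succAbove 0) = 0 := rfl
    have e6_1_1 : ((1:Fin 6).succAbove 1) = 2 := rfl
    have e6_1_2 : ((1:Fin 6).succAbove 2) = 3 := rfl
    have e6_1_3 : ((1:Fin 6).succAbove 3) = 4 := rfl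
    have e6_1_4 : ((1:Fin 6).succAbove 4) = 5 := rfl
    have e6_2_0 : ((2:Fin 6).succAbove 0) = 0 := rfl
    have e6_2_1 : ((2:Fin 6).succAbove 1) = 1 := rfl
    have e6_2_2 : ((2:Fin 6).succAbove 2) = 3 := rfl
    have e6_2_3 : ((2:Fin 6).succAbove 3) = 4 := rfl
    have e6_2_4 : ((2:Fin 6).succAbove 4) = 5 := rfl
    have e6_3_0 : ((3:Fin 6).succAbove 0) = 0 := rfl
    have e6_3_1 : ((3:Fin 6).succAbove 1) = 1 := rfl
    have e6_3_2 : ((3:Fin 6).succAbove 2) = 2 := rfl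
    have e6_3_3 : ((3:Fin 6).succAbove 3) = 4 := rfl
    have e6_3_4 : ((3:Fin 6).succAbove 4) = 5 := rfl
    have e6_4_0 : ((4:Fin 6).succAbove 0) = 0 := rfl
    have e6_4_1 : ((4:Fin 6).succAbove 1) = 1 := rfl
    have e6_4_2 : ((4:Fin 6).succAbove 2) = 2 := rfl
    have e6_4_3 : ((4:Fin 6).succAbove 3) = 3 := rfl
    have e6_4_4 : ((4:Fin 6).succAbove 4) = 5 := rfl
    have e6_5_0 : ((5:Fin 6).succAbove 0) = 0 := rfl
    have e6_5_1 : ((5:Fin 6).succAbove 1) = 1 := rfl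
    have e6_5_2 : ((5:Fin 6).succAbove 2) = 2 := rfl
    have e6_5_3 : ((5:Fin 6).succAbove 3) = 3 := rfl
    have e6_5_4 : ((5:Fin 6).succAbove 4) = 4 := rfl
    simp only [e5_0_0, e5_0_1, e5_0_2, e5_0_3, e5_1_0, e5_1_1, e5_1_2, e5_1_3, e5_2_0, e5_2_1, e5_2_2, e5_2_3, e5_3_0, e5_3_1, e5_3_2, e5_3_3, e5_4_0, e5_4_1, e5_4_2, e5_4_3,
      e6_0_0, e6_0_1, e6_0_2, e6_0_3, e6_0_4, e6_1_0, e6_1_1, e6_1_2, e6_1_3, e6_1_4, e6_2_0, e6_2_1, e6_2_2, e6_2_3, e6_2_4, e6_3_0, e6_3_1, e6_3_2, e6_3_3, e6_3_4, e6_4_0, e6_4_1, e6_4_2, e6_4_3, e6_4_4, e6_5_0, e6_5_1, e6_5_2, e6_5_3, e6_5_4]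
    simp only [CharTwo.neg_eq, one_pow, one_mul]
    ring_nf
    simp [h2]
  rw [← sum_pow_char, h, zero_pow]
  exact two_ne_zero
end

section
/- Let F be a field and z_1, z_2, z_3, z_4 ∈ F pairwise distinct. Let ν be a 1-cocycle on the tetrahedron with vertex set {1,2,3,4}, i.e., ν assigns ν_{ij} ∈ F to each pair i<j and satisfies ν_{jk} − ν_{ik} + ν_{ij} = 0 for all i<j<k. For each triangle i<j<k define x_{ijk} = ν_{ij} − (z_i − z_j)·ν_{jk}/(z_j − z_k). Then x_{124} = [ (z_3−z_2)(z_4−z_1)·x_{123} + (z_2−z_1)(z_4−z_3)·x_{134} ] / ( (z_3−z_1)(z_4−z_2) ) and x_{234} = (z_3−z_2)·(x_{134} − x_{123}) / (z_3−z_1). -/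
/-- For a 1-cochain `ν` on the tetrahedron with vertices `z 0, z 1, z 2, z 3`
(relabelling the paper's vertices `1,2,3,4` as `0,1,2,3`), the coordinate of
(the restriction of) `ν` to the triangle `ijk` modulo the 1-cocycle
`ω_{ij} = z_i − z_j`, with respect to the basis vector `(1,1,0)` of edge
components: `x_{ijk} = ν_{ij} − (z_i − z_j)·ν_{jk}/(z_j − z_k)`. -/
def triColor (F : Type*) [Field F] (z : Fin 4 → F) (ν : Fin 4 → Fin 4 → F)
    (i j k : Fin 4) : F :=
  ν i j - (z i - z j) * ν j k / (z j - z k)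

/-- for pairwise distinct `z 0, …, z 3` and a 1-cocycle `ν` on
the tetrahedron, the triangle coordinates `x_{ijk} = triColor` satisfy the
pentagon transition relations expressing `x_{124}` and `x_{234}` through
`x_{123}` and `x_{134}` (vertices `1,2,3,4` relabelled as `0,1,2,3`). -/
theorem pentagon_transition
    (F : Type*) [Field F] (z : Fin 4 → F)
    (hz : ∀ i j : Fin 4, i ≠ j → z i ≠ z j)
    (ν : Fin 4 → Fin 4 → F)
    (hν : ∀ i j k : Fin 4, i < j → j < k → ν j k - ν i k + ν i j = 0) :
    triColor F z ν 0 1 3 =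
      ((z 2 - z 1) * (z 3 - z 0) * triColor F z ν 0 1 2 +
        (z 1 - z 0) * (z 3 - z 2) * triColor F z ν 0 2 3) /
        ((z 2 - z 0) * (z 3 - z 1)) ∧
    triColor F z ν 1 2 3 =
      (z 2 - z 1) * (triColor F z ν 0 2 3 - triColor F z ν 0 1 2) /
        (z 2 - z 0) := by
  have r12 : ν 1 2 = ν 0 2 - ν 0 1 := by linear_combination hν 0 1 2 (by decide) (by decide)
  have r13 : ν 1 3 = ν 0 3 - ν 0 1 := by linear_combination hν 0 1 3 (by decide) (by decide)
  have r23 : ν 2 3 = ν 0 3 - ν 0 2 := by linear_combination hν 0 2 3 (by decide) (by decide)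
  have d01 : z 0 - z 1 ≠ 0 := sub_ne_zero.mpr (hz 0 1 (by decide))
  have d02 : z 0 - z 2 ≠ 0 := sub_ne_zero.mpr (hz 0 2 (by decide))
  have d03 : z 0 - z 3 ≠ 0 := sub_ne_zero.mpr (hz 0 3 (by decide))
  have d12 : z 1 - z 2 ≠ 0 := sub_ne_zero.mpr (hz 1 2 (by decide))
  have d13 : z 1 - z 3 ≠ 0 := sub_ne_zero.mpr (hz 1 3 (by decide))
  have d23 : z 2 - z 3 ≠ 0 := sub_ne_zero.mpr (hz 2 3 (by decide))
  have e02 : z 2 - z 0 ≠ 0 := fun h => d02 (by linear_combination -h)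
  have e13 : z 3 - z 1 ≠ 0 := fun h => d13 (by linear_combination -h)
  constructor <;> simp only [triColor, r12, r13, r23] <;> field_simp <;> ring
end
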